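/- arXiv:1612.05440 — 3 statements merged into one kernel-verified Lean document; each statement's English description precedes it below -/
import Mathlib

section
/- Let 𝒢 = (G_1, …, G_τ) be a graph history on a finite vertex set V with |V| = n, and let S_0 = V, S_1, …, S_{n−1} be any score_m peeling sequence. Then max_{0 ≤ i ≤ n−1} f_mm(S_i, 𝒢) = max_{∅ ≠ S ⊆ V} f_mm(S, 𝒢); that is, the greedy minimum-score peeling (the FindBFF_M algorithm) solves the BFF-mm problem optimally. -/
open scoped Classical
open Finset

/-- The degree of `u` in the subgraph of `G` induced by the vertex set `S`. -/
noncomputable def degIn {n : ℕ} (G : SimpleGraph (Fin n)) (S : Finset (Fin n)) (u : Fin n) : ℕ :=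
  (S.filter fun v => G.Adj u v).card

/-- The number of edges of the subgraph of `G` induced by `S`. -/
noncomputable def edgesIn {n : ℕ} (G : SimpleGraph (Fin n)) (S : Finset (Fin n)) : ℕ :=
  ((S ×ˢ S).filter fun p => p.1 < p.2 ∧ G.Adj p.1 p.2).card

/-- Minimum density `d_m(S, G)`: the minimum degree in the induced subgraph `G[S]`. -/
noncomputable def minDensity {n : ℕ} (G : SimpleGraph (Fin n)) (S : Finset (Fin n)) : ℕ :=
  sInf ((fun u => degIn G S u) '' (S : Set (Fin n)))

/-- Average density `d_a(S, G) = 2·|E(G[S])| / |S|`. -/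
noncomputable def avgDensity {n : ℕ} (G : SimpleGraph (Fin n)) (S : Finset (Fin n)) : ℝ :=
  2 * (edgesIn G S : ℝ) / (S.card : ℝ)

/-- `f_mm(S, 𝒢) = min_t d_m(S, G_t)`. -/
noncomputable def fmm {n τ : ℕ} (G : Fin τ → SimpleGraph (Fin n)) (S : Finset (Fin n)) : ℕ :=
  sInf (Set.range fun t => minDensity (G t) S)

/-- `f_am(S, 𝒢) = (1/τ) · Σ_t d_m(S, G_t)`. -/
noncomputable def fam {n τ : ℕ} (G : Fin τ → SimpleGraph (Fin n)) (S : Finset (Fin n)) : ℝ :=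
  (1 / (τ : ℝ)) * ∑ t, (minDensity (G t) S : ℝ)

/-- `f_ma(S, 𝒢) = min_t d_a(S, G_t)`. -/
noncomputable def fma {n τ : ℕ} (G : Fin τ → SimpleGraph (Fin n)) (S : Finset (Fin n)) : ℝ :=
  sInf (Set.range fun t => avgDensity (G t) S)

/-- `f_aa(S, 𝒢) = (1/τ) · Σ_t d_a(S, G_t)`. -/
noncomputable def faa {n τ : ℕ} (G : Fin τ → SimpleGraph (Fin n)) (S : Finset (Fin n)) : ℝ :=
  (1 / (τ : ℝ)) * ∑ t, avgDensity (G t) S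

/-- `score_m(v, 𝒢[S]) = min_t degree(v, G_t[S])`. -/
noncomputable def scoreM {n τ : ℕ} (G : Fin τ → SimpleGraph (Fin n)) (S : Finset (Fin n))
    (v : Fin n) : ℕ :=
  sInf (Set.range fun t => degIn (G t) S v)

/-- `score_a(v, 𝒢[S]) = (1/τ) · Σ_t degree(v, G_t[S])`. -/
noncomputable def scoreA {n τ : ℕ} (G : Fin τ → SimpleGraph (Fin n)) (S : Finset (Fin n))
    (v : Fin n) : ℝ :=
  (1 / (τ : ℝ)) * ∑ t, (degIn (G t) S v : ℝ)

/-- A `score_m` peeling sequence: `S 0 = V`, and at each step the removed vertex `v i`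
minimizes `score_m` over the current set. -/
def IsScoreMPeeling {n τ : ℕ} (G : Fin τ → SimpleGraph (Fin n)) (S : ℕ → Finset (Fin n))
    (v : ℕ → Fin n) : Prop :=
  S 0 = Finset.univ ∧
    ∀ i < n - 1, v i ∈ S i ∧ S (i + 1) = S i \ {v i} ∧
      ∀ u ∈ S i, scoreM G (S i) (v i) ≤ scoreM G (S i) u

/-- A `score_a` peeling sequence: `S 0 = V`, and at each step the removed vertex `v i`
minimizes `score_a` over the current set. -/
def IsScoreAPeeling {n τ : ℕ} (G : Fin τ → SimpleGraph (Fin n)) (S : ℕ → Finset (Fin n))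
    (v : ℕ → Fin n) : Prop :=
  S 0 = Finset.univ ∧
    ∀ i < n - 1, v i ∈ S i ∧ S (i + 1) = S i \ {v i} ∧
      ∀ u ∈ S i, scoreA G (S i) (v i) ≤ scoreA G (S i) u

/-!
If `S'` is nonempty, let `S j` be the last set of the peeling chain containing `S'`.
Either `S' = S j` is the final singleton, or the vertex `v j` peeled next lies in `S'`, and then
`f_mm(S') ≤ score_m(v j, 𝒢[S']) ≤ score_m(v j, 𝒢[S j]) = f_mm(S j)`: the score only grows with
the set, and the minimum score over a set equals its `f_mm` (both are the minimum of
`degree(u, G_t[S])` over `u ∈ S` and all `t`, taken in the two possible orders).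
-/

theorem Nat.exists_lt_and_not_succ {P : ℕ → Prop} {k : ℕ} (h0 : P 0) (hk : ¬ P k) :
    ∃ j < k, P j ∧ ¬ P (j + 1) := by
  induction k with
  | zero => exact absurd h0 hk
  | succ k ih =>
    by_cases hPk : P k
    · exact ⟨k, k.lt_succ_self, hPk, hk⟩
    · obtain ⟨j, hj, hPj, hPj'⟩ := ih hPk
      exact ⟨j, by omega, hPj, hPj'⟩

section Density

variable {n τ : ℕ}

theorem degIn_mono (G : SimpleGraph (Fin n)) {S T : Finset (Fin n)} (h : S ⊆ T) (u : Fin n) :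
    degIn G S u ≤ degIn G T u :=
  card_le_card (filter_subset_filter _ h)

theorem exists_degIn_eq_minDensity (G : SimpleGraph (Fin n)) {S : Finset (Fin n)}
    (hS : S.Nonempty) : ∃ u ∈ S, degIn G S u = minDensity G S :=
  Nat.sInf_mem ((coe_nonempty.2 hS).image _)

variable (G : Fin τ → SimpleGraph (Fin n))

theorem scoreM_mono {S T : Finset (Fin n)} (h : S ⊆ T) (u : Fin n) :
    scoreM G S u ≤ scoreM G T u :=
  ciInf_mono (OrderBot.bddBelow _) fun t => degIn_mono (G t) h u

theorem fmm_le_scoreM {S : Finset (Fin n)} {u : Fin n} (hu : u ∈ S) :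
    fmm G S ≤ scoreM G S u :=
  ciInf_mono (OrderBot.bddBelow _) fun _ => Nat.sInf_le ⟨u, hu, rfl⟩

theorem scoreM_le_fmm {S : Finset (Fin n)} {w : Fin n} (hw : w ∈ S)
    (hmin : ∀ u ∈ S, scoreM G S w ≤ scoreM G S u) : scoreM G S w ≤ fmm G S := by
  obtain hτ | hτ := isEmpty_or_nonempty (Fin τ)
  · simp [scoreM, Set.range_eq_empty]
  refine le_ciInf fun t => ?_
  obtain ⟨u, hu, hdeg⟩ := exists_degIn_eq_minDensity (G t) ⟨w, hw⟩
  calc scoreM G S w ≤ scoreM G S u := hmin u hu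
    _ ≤ degIn (G t) S u := ciInf_le (OrderBot.bddBelow _) t
    _ = minDensity (G t) S := hdeg

theorem fmm_le_fmm_of_subset_of_mem {S T : Finset (Fin n)} (hST : S ⊆ T) {w : Fin n}
    (hw : w ∈ S) (hmin : ∀ u ∈ T, scoreM G T w ≤ scoreM G T u) : fmm G S ≤ fmm G T :=
  calc fmm G S ≤ scoreM G S w := fmm_le_scoreM G hw
    _ ≤ scoreM G T w := scoreM_mono G hST w
    _ ≤ fmm G T := scoreM_le_fmm G (hST hw) hmin

end Density

namespace IsScoreMPeeling

variable {n τ : ℕ} {G : Fin τ → SimpleGraph (Fin n)} {S : ℕ → Finset (Fin n)} {v : ℕ → Fin n}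

theorem card_eq (hpeel : IsScoreMPeeling G S v) {i : ℕ} (hi : i ≤ n - 1) :
    (S i).card = n - i := by
  induction i with
  | zero => simp [hpeel.1]
  | succ k ih =>
    obtain ⟨hvk, hSk, -⟩ := hpeel.2 k (by omega)
    rw [hSk, sdiff_singleton_eq_erase, card_erase_of_mem hvk, ih (by omega)]
    omega

theorem nonempty (hpeel : IsScoreMPeeling G S v) {i : ℕ} (hi : i < n) : (S i).Nonempty :=
  card_pos.mp (by rw [hpeel.card_eq (by omega)]; omega)

theorem exists_fmm_le (hpeel : IsScoreMPeeling G S v) {S' : Finset (Fin n)}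
    (hS' : S'.Nonempty) : ∃ j < n, fmm G S' ≤ fmm G (S j) := by
  have hn : 0 < n := hS'.choose.pos
  by_cases hlast : S' ⊆ S (n - 1)
  · have hcard : (S (n - 1)).card ≤ S'.card := by
      rw [hpeel.card_eq le_rfl]
      have := hS'.card_pos
      omega
    exact ⟨n - 1, by omega, by rw [eq_of_subset_of_card_le hlast hcard]⟩
  obtain ⟨j, hj, hsub, hnsub⟩ :=
    Nat.exists_lt_and_not_succ (P := fun i => S' ⊆ S i) (by simp [hpeel.1]) hlast
  obtain ⟨-, hSj, hmin⟩ := hpeel.2 j hj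
  have hvj : v j ∈ S' := by
    by_contra hv
    exact hnsub (hSj ▸ subset_sdiff.2 ⟨hsub, disjoint_singleton_right.2 hv⟩)
  exact ⟨j, by omega, fmm_le_fmm_of_subset_of_mem G hsub hvj hmin⟩

end IsScoreMPeeling

theorem findBffM_optimal_for_bff_mm_general {n τ : ℕ} (hn : 0 < n)
    (G : Fin τ → SimpleGraph (Fin n)) (S : ℕ → Finset (Fin n)) (v : ℕ → Fin n)
    (hpeel : IsScoreMPeeling G S v) :
    ∃ i < n, (S i).Nonempty ∧
      ∀ S' : Finset (Fin n), S'.Nonempty → fmm G S' ≤ fmm G (S i) := by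
  obtain ⟨i, hi, hbest⟩ :=
    exists_max_image (range n) (fun i => fmm G (S i)) ⟨0, mem_range.mpr hn⟩
  refine ⟨i, mem_range.mp hi, hpeel.nonempty (mem_range.mp hi), fun S' hS' => ?_⟩
  obtain ⟨j, hj, hle⟩ := hpeel.exists_fmm_le hS'
  exact hle.trans (hbest j (mem_range.mpr hj))

/-- The greedy minimum-`score_m` peeling (the `FindBFF_M` algorithm) solves
the BFF-mm problem optimally: the maximum of `f_mm` over the peeling chain equals the maximum
of `f_mm` over all nonempty subsets of `V`. -/
theorem findBffM_optimal_for_bff_mm {n τ : ℕ} (hn : 0 < n) (hτ : 0 < τ)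
    (G : Fin τ → SimpleGraph (Fin n)) (S : ℕ → Finset (Fin n)) (v : ℕ → Fin n)
    (hpeel : IsScoreMPeeling G S v) :
    ∃ i < n, (S i).Nonempty ∧
      ∀ S' : Finset (Fin n), S'.Nonempty → fmm G S' ≤ fmm G (S i) :=
  findBffM_optimal_for_bff_mm_general hn G S v hpeel
end

section
/- Let G be a simple undirected graph on the finite vertex set V = {1, …, n}, and for each i ∈ V let H_i be the star graph on V whose edge set is {{i, j} : {i, j} ∈ E(G)}. Then for every integer k with 2 ≤ k ≤ n: G contains a clique of size at least k if and only if there exist a nonempty subset S ⊆ V and a k-element subset C ⊆ {1, …, n} such that (1/k)·Σ_{i ∈ C} d_m(S, H_i) ≥ 1. -/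
open scoped Classical
open Finset

/-- The star snapshot `H_i`: the graph on the vertices of `G` whose edge set is
`{{i, j} : {i, j} ∈ E(G)}`. -/
def starAt {n : ℕ} (G : SimpleGraph (Fin n)) (i : Fin n) : SimpleGraph (Fin n) where
  Adj a b := (a = i ∧ G.Adj i b) ∨ (b = i ∧ G.Adj a i)
  symm := by
    constructor
    intro a b h
    rcases h with ⟨ha, hadj⟩ | ⟨hb, hadj⟩
    · exact Or.inr ⟨ha, hadj.symm⟩
    · exact Or.inl ⟨hb, hadj.symm⟩
  loopless := by
    constructor
    intro a h
    rcases h with ⟨ha, hadj⟩ | ⟨ha, hadj⟩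
    · subst ha; exact G.irrefl hadj
    · subst ha; exact G.irrefl hadj

/-! In the star `H_i` every vertex other than `i` has degree at most one, so `d_m(S, H_i) ≤ 1`
and an average of at least one over `k` snapshots forces `d_m(S, H_i) = 1` for every `i ∈ C`.
That happens exactly when `i ∈ S`, `S ≠ {i}` and every other vertex of `S` is a `G`-neighbour
of `i`; hence `C` is a clique. Conversely, for a `k`-clique `S` take `C = S`. -/

theorem Finset.eq_one_of_le_one_of_card_le_sum {ι : Type*} {s : Finset ι} {f : ι → ℕ}
    (hf : ∀ i ∈ s, f i ≤ 1) (hsum : s.card ≤ ∑ i ∈ s, f i) : ∀ i ∈ s, f i = 1 := by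
  have hle : ∑ i ∈ s, f i ≤ s.card := by simpa using s.sum_le_card_nsmul f 1 hf
  exact (Finset.sum_eq_sum_iff_of_le hf).1 (by simp only [sum_const, smul_eq_mul, mul_one]; omega)

section MinDensity

variable {n : ℕ} (G : SimpleGraph (Fin n)) (S : Finset (Fin n))

theorem one_le_degIn_iff {u : Fin n} : 1 ≤ degIn G S u ↔ ∃ v ∈ S, G.Adj u v := by
  simp [degIn, Finset.one_le_card, Finset.filter_nonempty_iff]

theorem degIn_le_card (u : Fin n) : degIn G S u ≤ S.card :=
  card_filter_le _ _

theorem minDensity_le_degIn {u : Fin n} (hu : u ∈ S) : minDensity G S ≤ degIn G S u :=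
  Nat.sInf_le ⟨u, hu, rfl⟩

theorem minDensity_empty : minDensity G ∅ = 0 := by
  simp [minDensity]

theorem le_minDensity_iff {S : Finset (Fin n)} (hS : S.Nonempty) {m : ℕ} :
    m ≤ minDensity G S ↔ ∀ u ∈ S, m ≤ degIn G S u := by
  rw [minDensity, le_csInf_iff (OrderBot.bddBelow _) (hS.to_set.image _), Set.forall_mem_image]
  rfl

theorem one_le_minDensity_iff :
    1 ≤ minDensity G S ↔ S.Nonempty ∧ ∀ u ∈ S, ∃ v ∈ S, G.Adj u v := by
  rcases S.eq_empty_or_nonempty with rfl | hS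
  · simp [minDensity_empty]
  · simp only [le_minDensity_iff G hS, one_le_degIn_iff, hS, true_and]

end MinDensity

section Star

variable {n : ℕ} {G : SimpleGraph (Fin n)} {i u v : Fin n}

theorem starAt_adj_of_ne (hu : u ≠ i) : (starAt G i).Adj u v ↔ v = i ∧ G.Adj u i := by
  simp [starAt, hu]

theorem degIn_starAt_le_one (S : Finset (Fin n)) (hu : u ≠ i) : degIn (starAt G i) S u ≤ 1 :=
  card_le_one.mpr fun a ha b hb => by
    simp only [mem_filter, starAt_adj_of_ne hu] at ha hb
    rw [ha.2.1, hb.2.1]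

theorem minDensity_starAt_le_one (S : Finset (Fin n)) : minDensity (starAt G i) S ≤ 1 := by
  rcases S.eq_empty_or_nonempty with rfl | ⟨u, hu⟩
  · simp [minDensity_empty]
  by_cases h : ∃ w ∈ S, w ≠ i
  · obtain ⟨w, hw, hwi⟩ := h
    exact (minDensity_le_degIn _ S hw).trans (degIn_starAt_le_one S hwi)
  · push Not at h
    calc minDensity (starAt G i) S ≤ S.card :=
          (minDensity_le_degIn _ S hu).trans (degIn_le_card ..)
      _ ≤ 1 := card_le_one.mpr fun a ha b hb => by rw [h a ha, h b hb]

theorem one_le_minDensity_starAt_of_isClique {S : Finset (Fin n)}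
    (hS : G.IsClique (S : Set (Fin n))) (hcard : 1 < S.card) (hi : i ∈ S) :
    1 ≤ minDensity (starAt G i) S := by
  refine (one_le_minDensity_iff _ S).2 ⟨⟨i, hi⟩, fun u hu => ?_⟩
  by_cases hui : u = i
  · subst hui
    obtain ⟨w, hw, hwu⟩ := exists_mem_ne hcard u
    exact ⟨w, hw, Or.inl ⟨rfl, hS hu hw hwu.symm⟩⟩
  · exact ⟨i, hi, Or.inr ⟨rfl, hS hu hi hui⟩⟩

theorem mem_and_adj_of_one_le_minDensity_starAt {S : Finset (Fin n)}
    (h : 1 ≤ minDensity (starAt G i) S) : i ∈ S ∧ ∀ u ∈ S, u ≠ i → G.Adj u i := by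
  obtain ⟨⟨w, hw⟩, hadj⟩ := (one_le_minDensity_iff _ S).1 h
  constructor
  · obtain ⟨v, hv, hwv⟩ := hadj w hw
    rcases hwv with ⟨rfl, -⟩ | ⟨rfl, -⟩
    exacts [hw, hv]
  · intro u hu hui
    obtain ⟨v, -, huv⟩ := hadj u hu
    exact ((starAt_adj_of_ne hui).1 huv).2

theorem isClique_of_one_le_minDensity_starAt {S C : Finset (Fin n)}
    (hC : ∀ i ∈ C, 1 ≤ minDensity (starAt G i) S) : G.IsClique (C : Set (Fin n)) := by
  intro i hi j hj hij
  have hiS := (mem_and_adj_of_one_le_minDensity_starAt (hC i hi)).1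
  exact (mem_and_adj_of_one_le_minDensity_starAt (hC j hj)).2 i hiS hij

end Star

theorem o2bff_am_clique_reduction_general {n : ℕ} (G : SimpleGraph (Fin n)) (k : ℕ)
    (hk2 : 2 ≤ k) :
    (∃ K : Finset (Fin n), k ≤ K.card ∧ G.IsClique (K : Set (Fin n))) ↔
      ∃ (S C : Finset (Fin n)), S.Nonempty ∧ C.card = k ∧
        (1 : ℝ) ≤ (1 / (k : ℝ)) * ∑ i ∈ C, (minDensity (starAt G i) S : ℝ) := by
  have hk : (0 : ℝ) < k := by exact_mod_cast (by omega : 0 < k)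
  have hmean : ∀ S C : Finset (Fin n), (1 : ℝ) ≤ (1 / (k : ℝ)) *
      ∑ i ∈ C, (minDensity (starAt G i) S : ℝ) ↔ k ≤ ∑ i ∈ C, minDensity (starAt G i) S := by
    intro S C
    rw [one_div, le_inv_mul_iff₀ hk, mul_one]
    norm_cast
  simp only [hmean]
  constructor
  · rintro ⟨K, hK, hclique⟩
    obtain ⟨S, hSK, rfl⟩ := exists_subset_card_eq hK
    refine ⟨S, S, card_pos.mp (by omega), rfl, ?_⟩
    calc S.card = ∑ _i ∈ S, 1 := by simp
      _ ≤ _ := sum_le_sum fun i hi =>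
        one_le_minDensity_starAt_of_isClique (hclique.subset hSK) (by omega) hi
  · rintro ⟨S, C, -, rfl, hsum⟩
    have hC := Finset.eq_one_of_le_one_of_card_le_sum
      (fun _ _ => minDensity_starAt_le_one S) hsum
    exact ⟨C, le_rfl, isClique_of_one_le_minDensity_starAt fun i hi => (hC i hi).ge⟩

/-- Correctness of the reduction from Maximum Clique for the O²BFF-am problem:
`G` has a clique of size at least `k` iff there are a nonempty `S ⊆ V` and a `k`-element set
`C` of star snapshots with `(1/k) · Σ_{i ∈ C} d_m(S, H_i) ≥ 1`. -/
theorem o2bff_am_clique_reduction {n : ℕ} (G : SimpleGraph (Fin n)) (k : ℕ)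
    (hk2 : 2 ≤ k) (hkn : k ≤ n) :
    (∃ K : Finset (Fin n), k ≤ K.card ∧ G.IsClique (K : Set (Fin n))) ↔
      ∃ (S C : Finset (Fin n)), S.Nonempty ∧ C.card = k ∧
        (1 : ℝ) ≤ (1 / (k : ℝ)) * ∑ i ∈ C, (minDensity (starAt G i) S : ℝ) :=
  o2bff_am_clique_reduction_general G k hk2
end

section
/- Let G be a simple undirected graph on the finite vertex set V, and for each edge e ∈ E(G) let H_e be the graph on V whose only edge is e. Let k ≥ 2 be an integer and K = k(k−1)/2. Then: G contains a clique of size at least k if and only if there exist a nonempty subset S ⊆ V and a K-element subset C ⊆ E(G) such that min_{e ∈ C} d_a(S, H_e) ≥ 2/k. -/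
open scoped Classical
open Finset

/-- The single-edge snapshot `H_e`: the graph on the vertices of `G` whose only edge is `e`. -/
def edgeGraph {n : ℕ} (e : Sym2 (Fin n)) : SimpleGraph (Fin n) where
  Adj a b := a ≠ b ∧ s(a, b) = e
  symm := by
    constructor
    intro a b h
    exact ⟨h.1.symm, by rw [Sym2.eq_swap]; exact h.2⟩
  loopless := by
    constructor
    intro a h
    exact h.1 rfl

lemma edgesIn_edgeGraph_of_lt {n : ℕ} (S : Finset (Fin n)) {a b : Fin n} (hab : a < b) :
    edgesIn (edgeGraph s(a, b)) S = if a ∈ S ∧ b ∈ S then 1 else 0 := by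
  unfold edgesIn
  have hset : ((S ×ˢ S).filter fun p => p.1 < p.2 ∧ (edgeGraph s(a, b)).Adj p.1 p.2)
      = if a ∈ S ∧ b ∈ S then ({(a, b)} : Finset (Fin n × Fin n)) else ∅ := by
    ext p; rcases p with ⟨x, y⟩
    rw [Finset.mem_filter, Finset.mem_product]; simp only [edgeGraph]
    constructor
    · rintro ⟨⟨hx, hy⟩, hlt, _, heq⟩
      rw [Sym2.eq_iff] at heq
      rcases heq with ⟨rfl, rfl⟩ | ⟨rfl, rfl⟩
      · simp [hx, hy]
      · exact absurd (hlt.trans hab) (lt_irrefl _)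
    · intro hmem
      by_cases h : a ∈ S ∧ b ∈ S
      · simp only [if_pos h, Finset.mem_singleton, Prod.mk.injEq] at hmem
        obtain ⟨rfl, rfl⟩ := hmem
        exact ⟨⟨h.1, h.2⟩, hab, hab.ne, rfl⟩
      · simp [if_neg h] at hmem
  rw [hset]
  by_cases h : a ∈ S ∧ b ∈ S <;> simp [h]

lemma edgesIn_edgeGraph {n : ℕ} (S : Finset (Fin n)) {a b : Fin n} (hab : a ≠ b) :
    edgesIn (edgeGraph s(a, b)) S = if a ∈ S ∧ b ∈ S then 1 else 0 := by
  rcases hab.lt_or_gt with h | h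
  · exact edgesIn_edgeGraph_of_lt S h
  · rw [show s(a, b) = s(b, a) from Sym2.eq_swap, edgesIn_edgeGraph_of_lt S h]
    by_cases h1 : a ∈ S <;> by_cases h2 : b ∈ S <;> simp [h1, h2, and_comm]

lemma avgDensity_edgeGraph {n : ℕ} (S : Finset (Fin n)) {a b : Fin n} (hab : a ≠ b) :
    avgDensity (edgeGraph s(a, b)) S
      = if a ∈ S ∧ b ∈ S then 2 / (S.card : ℝ) else 0 := by
  unfold avgDensity
  rw [edgesIn_edgeGraph S hab]
  by_cases h : a ∈ S ∧ b ∈ S <;> simp [h]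

/-- Correctness of the reduction from Maximum Clique for the O²BFF-ma problem:
`G` has a clique of size at least `k` iff there are a nonempty `S ⊆ V` and a set `C` of
`K = k(k-1)/2` single-edge snapshots `H_e`, `e ∈ E(G)`, with
`min_{e ∈ C} d_a(S, H_e) ≥ 2/k`. -/
theorem o2bff_ma_clique_reduction {n : ℕ} (G : SimpleGraph (Fin n)) (k : ℕ) (hk : 2 ≤ k) :
    (∃ K : Finset (Fin n), k ≤ K.card ∧ G.IsClique (K : Set (Fin n))) ↔
      ∃ (S : Finset (Fin n)) (C : Finset (Sym2 (Fin n))), S.Nonempty ∧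
        (∀ e ∈ C, e ∈ G.edgeSet) ∧ C.card = k * (k - 1) / 2 ∧
        ∀ e ∈ C, 2 / (k : ℝ) ≤ avgDensity (edgeGraph e) S := by
  have hk0 : (0 : ℝ) < k := by positivity
  constructor
  · rintro ⟨K, hKcard, hKclique⟩
    obtain ⟨S, hSK, hScard⟩ := Finset.exists_subset_card_eq hKcard
    refine ⟨S, S.offDiag.image Sym2.mk.uncurry, ?_, ?_, ?_, ?_⟩
    · rw [← Finset.card_pos, hScard]; omega
    · intro e he
      simp only [Finset.mem_image, Finset.mem_offDiag] at he
      obtain ⟨⟨a, b⟩, ⟨ha, hb, hab⟩, rfl⟩ := he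
      exact hKclique (hSK ha) (hSK hb) hab
    · rw [Sym2.card_image_offDiag, hScard, Nat.choose_two_right]
    · intro e he
      simp only [Finset.mem_image, Finset.mem_offDiag] at he
      obtain ⟨⟨a, b⟩, ⟨ha, hb, hab⟩, rfl⟩ := he
      dsimp only [Function.uncurry_apply_pair] at ha hb hab ⊢
      rw [avgDensity_edgeGraph S hab, if_pos ⟨ha, hb⟩, hScard]
  · rintro ⟨S, C, hS, hE, hCcard, hd⟩
    have hC2 : C.card = k.choose 2 := by rw [hCcard, Nat.choose_two_right]
    have hkey : ∀ e ∈ C, ∃ a b : Fin n, a ≠ b ∧ a ∈ S ∧ b ∈ S ∧ G.Adj a b ∧ e = s(a, b) := by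
      intro e he
      obtain ⟨a, b, rfl⟩ : ∃ a b : Fin n, e = s(a, b) := by
        induction e using Sym2.ind with
        | _ x y => exact ⟨x, y, rfl⟩
      have hadj : G.Adj a b := hE _ he
      have hab := hadj.ne
      have hd' := hd _ he
      rw [avgDensity_edgeGraph S hab] at hd'
      by_cases h : a ∈ S ∧ b ∈ S
      · exact ⟨a, b, hab, h.1, h.2, hadj, rfl⟩
      · rw [if_neg h] at hd'
        exact absurd hd' (by push_neg; positivity)
    -- S has at most k vertices
    have hCne : C.Nonempty := by
      rw [← Finset.card_pos, hC2]
      exact Nat.choose_pos hk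
    have hSk : S.card ≤ k := by
      obtain ⟨e, he⟩ := hCne
      obtain ⟨a, b, hab, ha, hb, _, rfl⟩ := hkey e he
      have hd' := hd _ he
      rw [avgDensity_edgeGraph S hab, if_pos ⟨ha, hb⟩] at hd'
      have hS0 : (0 : ℝ) < S.card := by
        exact_mod_cast Finset.card_pos.2 hS
      have := (div_le_div_iff₀ hk0 hS0).1 hd'
      have : (S.card : ℝ) ≤ k := by nlinarith
      exact_mod_cast this
    have hsub : C ⊆ S.offDiag.image Sym2.mk.uncurry := by
      intro e he
      obtain ⟨a, b, hab, ha, hb, _, rfl⟩ := hkey e he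
      exact Finset.mem_image.2 ⟨(a, b), Finset.mem_offDiag.2 ⟨ha, hb, hab⟩, rfl⟩
    have himg : (S.offDiag.image Sym2.mk.uncurry).card ≤ C.card := by
      rw [Sym2.card_image_offDiag, hC2]
      exact Nat.choose_le_choose 2 hSk
    have hCeq : C = S.offDiag.image Sym2.mk.uncurry := Finset.eq_of_subset_of_card_le hsub himg
    -- |S| = k
    have hSge : k ≤ S.card := by
      by_contra hlt
      push_neg at hlt
      have h1 : S.card.choose 2 = k.choose 2 := by
        rw [← Sym2.card_image_offDiag, ← hCeq, hC2]
      have h2 : S.card ≤ k - 1 := by omega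
      have h3 : S.card.choose 2 ≤ (k - 1).choose 2 := Nat.choose_le_choose 2 h2
      have h4 : k.choose 2 = (k - 1).choose 1 + (k - 1).choose 2 := by
        have h : k = (k - 1) + 1 := by omega
        rw [h]; simp [Nat.choose_succ_succ]
      have h5 : (k - 1).choose 1 = k - 1 := Nat.choose_one_right _
      omega
    refine ⟨S, hSge, ?_⟩
    intro a ha b hb hab
    have : s(a, b) ∈ C := by
      rw [hCeq]
      exact Finset.mem_image.2 ⟨(a, b), Finset.mem_offDiag.2 ⟨ha, hb, hab⟩, rfl⟩
    exact hE _ this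
end
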